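/- arXiv:math/0606486 — 5 statements merged into one kernel-verified Lean document; each statement's English description precedes it below -/
import Mathlib

section
/- In any associative ring satisfying x^3 = 0 for all x, for all elements x and y one has (xy)^2 = y^2 x^2, i.e. x*y*x*y = y^2*x^2. -/
/-- In any associative ring satisfying `x^3 = 0`, one has `(xy)^2 = y^2 x^2`. -/
theorem stmt_4 {R : Type*} [NonUnitalRing R] (hcube : ∀ x : R, x * x * x = 0)
    (x y : R) : x * y * x * y = y * y * (x * x) := by
  -- two-variable linearization E(a,b)
  have E : ∀ a b : R,
      a*a*b + a*b*a + b*(a*a) + a*(b*b) + b*a*b + b*b*a = 0 := by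
    intro a b
    have h : a*a*b + a*b*a + b*(a*a) + a*(b*b) + b*a*b + b*b*a
        = (a+b)*(a+b)*(a+b) - a*a*a - b*b*b := by noncomm_ring
    rw [h, hcube, hcube, hcube]; simp
  -- full linearization P(a,b,c)
  have P : ∀ a b c : R,
      a*b*c + a*c*b + b*a*c + b*c*a + c*a*b + c*b*a = 0 := by
    intro a b c
    have h : a*b*c + a*c*b + b*a*c + b*c*a + c*a*b + c*b*a
        = (a+b+c)*(a+b+c)*(a+b+c) - (a+b)*(a+b)*(a+b) - (a+c)*(a+c)*(a+c)
          - (b+c)*(b+c)*(b+c) + a*a*a + b*b*b + c*c*c := by noncomm_ring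
    rw [h, hcube, hcube, hcube, hcube, hcube, hcube, hcube]; simp
  -- C1 : x²yx + xyx² = 0  (from P(x², x, y) minus cube terms)
  have C1 : x*x*(y*x) + x*y*(x*x) = 0 := by
    have h := P (x*x) x y
    have h2 : x*x*(y*x) + x*y*(x*x)
        = (x*x*x*y + x*x*y*x + x*(x*x)*y + x*y*(x*x) + y*(x*x)*x + y*x*(x*x))
          - ((x*x*x)*y + (x*x*x)*y) - (y*(x*x*x) + y*(x*x*x)) := by noncomm_ring
    rw [h2, h, hcube]; simp
  -- x²yx² = 0
  have C2 : x*x*y*(x*x) = 0 := by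
    have h : x*x*y*(x*x) = x*(x*x*(y*x) + x*y*(x*x)) - (x*x*x)*(y*x) := by
      noncomm_ring
    rw [h, C1, hcube]; simp
  -- D1 : y²xy + yxy² = 0
  have D1 : y*y*(x*y) + y*x*(y*y) = 0 := by
    have h := P (y*y) y x
    have h2 : y*y*(x*y) + y*x*(y*y)
        = (y*y*y*x + y*y*x*y + y*(y*y)*x + y*x*(y*y) + x*(y*y)*y + x*y*(y*y))
          - ((y*y*y)*x + (y*y*y)*x) - (x*(y*y*y) + x*(y*y*y)) := by noncomm_ring
    rw [h2, h, hcube]; simp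
  -- V4 : x²y² + xyxy + yx²y = 0  (from E(x,y)·y minus cube/D1 terms)
  have V4 : x*x*(y*y) + x*y*x*y + y*(x*x)*y = 0 := by
    have h := E x y
    have h2 : x*x*(y*y) + x*y*x*y + y*(x*x)*y
        = (x*x*y + x*y*x + y*(x*x) + x*(y*y) + y*x*y + y*y*x)*y
          - x*(y*y*y) - (y*x*(y*y) + y*y*(x*y)) := by noncomm_ring
    rw [h2, h, hcube]
    have : y*x*(y*y) + y*y*(x*y) = 0 := by
      rw [← D1]; noncomm_ring
    rw [this]; simp
  -- W : y²x² + yx²y + x²y² = 0  (from E(y, x²) minus cube terms)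
  have W : y*y*(x*x) + y*(x*x)*y + x*x*(y*y) = 0 := by
    have h := E y (x*x)
    have h2 : y*y*(x*x) + y*(x*x)*y + x*x*(y*y)
        = (y*y*(x*x) + y*(x*x)*y + x*x*(y*y) + y*((x*x)*(x*x))
            + (x*x)*y*(x*x) + (x*x)*(x*x)*y)
          - y*(x*(x*x*x)) - x*x*y*(x*x) - x*(x*x*x)*y := by noncomm_ring
    rw [h2, h, hcube, C2]; simp
  -- conclude: xyxy = -x²y² - yx²y = y²x²
  have : x*y*x*y - y*y*(x*x)
      = (x*x*(y*y) + x*y*x*y + y*(x*x)*y)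
        - (y*y*(x*x) + y*(x*x)*y + x*x*(y*y)) + (y*y*(x*x) - y*y*(x*x)) := by
    noncomm_ring
  have h0 : x*y*x*y - y*y*(x*x) = 0 := by rw [this, V4, W]; simp
  have := sub_eq_zero.mp h0
  exact this
end

section
/- Let R be an associative algebra over a field of characteristic 0 or greater than 3 in which x^3 = 0 for all x. Then the product of any six elements of R is zero: a1*a2*a3*a4*a5*a6 = 0. -/
/-- Over a field of characteristic `0` or `> 3`, a (non-unital) associative
algebra satisfying `x^3 = 0` is nilpotent of degree at most 6: the product of
any six elements is zero. -/
theorem stmt_8 {K R : Type*} [Field K] [NonUnitalRing R] [Module K R]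
    [IsScalarTower K R R] [SMulCommClass K R R]
    (hchar : ∀ p : ℕ, CharP K p → p = 0 ∨ 3 < p)
    (hcube : ∀ x : R, x * x * x = 0)
    (a1 a2 a3 a4 a5 a6 : R) : a1 * a2 * a3 * a4 * a5 * a6 = 0 := by
  -- characteristic facts
  have h2K : ((2 : ℤ) : K) ≠ 0 := by
    intro h
    have h' : ((2 : ℕ) : K) = 0 := by exact_mod_cast h
    rw [CharP.cast_eq_zero_iff K (ringChar K) 2] at h'
    rcases hchar _ (ringChar.charP K) with h0 | h3
    · rw [h0] at h'
      have := Nat.eq_zero_of_zero_dvd h'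
      omega
    · have := Nat.le_of_dvd (by norm_num) h'
      omega
  have h6K : ((6 : ℤ) : K) ≠ 0 := by
    intro h
    have h' : ((6 : ℕ) : K) = 0 := by exact_mod_cast h
    rw [CharP.cast_eq_zero_iff K (ringChar K) 6] at h'
    rcases hchar _ (ringChar.charP K) with h0 | h3
    · rw [h0] at h'
      have := Nat.eq_zero_of_zero_dvd h'
      omega
    · rcases CharP.char_is_prime_or_zero K (ringChar K) with hpr | h0
      · have hle := Nat.le_of_dvd (by norm_num) h'
        have h4 : ringChar K = 4 ∨ ringChar K = 5 ∨ ringChar K = 6 := by omega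
        rcases h4 with h4 | h4 | h4 <;> rw [h4] at hpr h'
        · exact absurd hpr (by decide)
        · omega
        · exact absurd hpr (by decide)
      · omega
  have cancel : ∀ (n : ℤ), ((n : ℤ) : K) ≠ 0 → ∀ x : R, n • x = 0 → x = 0 := by
    intro n hn x hx
    have h2 : ((n : K)) • x = 0 := by rw [Int.cast_smul_eq_zsmul]; exact hx
    have h3 := congrArg (fun y : R => ((n : K))⁻¹ • y) h2
    simpa [smul_smul, inv_mul_cancel₀ hn] using h3
  -- A: full linearization step 1
  have hA : ∀ x y : R, x*x*y + x*y*x + y*x*x = 0 := by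
    intro x y
    have h1 := hcube (x + y)
    have h2 := hcube (x - y)
    have h3 := hcube y
    have key : (2:ℤ) • (x*x*y + x*y*x + y*x*x) =
        (x+y)*(x+y)*(x+y) - (x-y)*(x-y)*(x-y) - (y*y*y + y*y*y) := by
      noncomm_ring
    rw [h1, h2, h3] at key
    simp only [smul_zero, mul_zero, zero_mul, add_zero, zero_add, sub_zero, zero_sub, neg_zero] at key
    exact cancel 2 h2K _ key
  -- S: full linearization of x^3
  have hS : ∀ x y z : R,
      x*y*z + x*z*y + y*x*z + y*z*x + z*x*y + z*y*x = 0 := by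
    intro x y z
    have h1 := hA (x + z) y
    have h2 := hA x y
    have h3 := hA z y
    have key : x*y*z + x*z*y + y*x*z + y*z*x + z*x*y + z*y*x =
        ((x+z)*(x+z)*y + (x+z)*y*(x+z) + y*(x+z)*(x+z))
          - (x*x*y + x*y*x + y*x*x) - (z*z*y + z*y*z + y*z*z) := by
      noncomm_ring
    rw [h1, h2, h3] at key
    simpa using key
  -- Higman's lemma: x^2 z y^2 = 0
  have hL4 : ∀ x z y : R, x*x*z*(y*y) = 0 := by
    intro x z y
    have e1 := hA y (x*x*z)
    have e2 := hA x y
    have e3 := hS x y z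
    have e4 := hS x y (y*z)
    have e5 := hS x x (y*y)
    have e6 := hA y z
    have key : (6:ℤ) • (x*x*z*(y*y)) =
        (2:ℤ) • (y*y*(x*x*z) + y*(x*x*z)*y + (x*x*z)*y*y)
        + (-2:ℤ) • ((x*x*y + x*y*x + y*x*x)*z*y)
        + (2:ℤ) • (x*y*(x*y*z + x*z*y + y*x*z + y*z*x + z*x*y + z*y*x))
        + (-2:ℤ) • (x*(x*y*(y*z) + x*(y*z)*y + y*x*(y*z) + y*(y*z)*x + (y*z)*x*y + (y*z)*y*x))
        - (x*x*(y*y) + x*(y*y)*x + x*x*(y*y) + x*(y*y)*x + (y*y)*x*x + (y*y)*x*x)*z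
        + (4:ℤ) • (x*x*(y*y*z + y*z*y + z*y*y)) := by
      noncomm_ring
    rw [e1, e2, e3, e4, e5, e6] at key
    simp only [smul_zero, mul_zero, zero_mul, add_zero, zero_add, sub_zero, zero_sub, neg_zero] at key
    exact cancel 6 h6K _ key
  -- polarizations of L4
  have hL4a : ∀ a s m c : R, (a*s + s*a)*m*(c*c) = 0 := by
    intro a s m c
    have h1 := hL4 (a + s) m c
    have h2 := hL4 a m c
    have h3 := hL4 s m c
    have key : (a*s + s*a)*m*(c*c) =
        (a+s)*(a+s)*m*(c*c) - a*a*m*(c*c) - s*s*m*(c*c) := by noncomm_ring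
    rw [h1, h2, h3] at key
    simpa using key
  have hL4b : ∀ a m c d : R, a*a*m*(c*d + d*c) = 0 := by
    intro a m c d
    have h1 := hL4 a m (c + d)
    have h2 := hL4 a m c
    have h3 := hL4 a m d
    have key : a*a*m*(c*d + d*c) =
        a*a*m*((c+d)*(c+d)) - a*a*m*(c*c) - a*a*m*(d*d) := by noncomm_ring
    rw [h1, h2, h3] at key
    simpa using key
  -- Z5 : x y z w t^2 = 0
  have hZ5 : ∀ x y z w t : R, x*y*z*w*(t*t) = 0 := by
    intro x y z w t
    have e1 := hL4a y z w t
    have e2 := hL4a y (x*z) w t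
    have e3 := hL4a x y (z*w) t
    have key : (2:ℤ) • (x*y*z*w*(t*t)) =
        x*((y*z + z*y)*w*(t*t)) - (y*(x*z) + (x*z)*y)*w*(t*t)
          + (x*y + y*x)*(z*w)*(t*t) := by noncomm_ring
    rw [e1, e2, e3] at key
    simp only [smul_zero, mul_zero, zero_mul, add_zero, zero_add, sub_zero, zero_sub, neg_zero] at key
    exact cancel 2 h2K _ key
  -- Z1 : t^2 x y z w = 0
  have hZ1 : ∀ t x y z w : R, t*t*x*y*z*w = 0 := by
    intro t x y z w
    have e1 := hL4b t x y (z*w)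
    have e2 := hL4b t x z (w*y)
    have e3 := hL4b t x w (y*z)
    have key : (2:ℤ) • (t*t*x*y*z*w) =
        t*t*x*(y*(z*w) + (z*w)*y) - t*t*x*(z*(w*y) + (w*y)*z)
          + t*t*x*(w*(y*z) + (y*z)*w) := by noncomm_ring
    rw [e1, e2, e3] at key
    simp only [smul_zero, mul_zero, zero_mul, add_zero, zero_add, sub_zero, zero_sub, neg_zero] at key
    exact cancel 2 h2K _ key
  -- polarized versions
  have hZ5p : ∀ x y z w t s : R, x*y*z*w*(t*s + s*t) = 0 := by
    intro x y z w t s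
    have h1 := hZ5 x y z w (t + s)
    have h2 := hZ5 x y z w t
    have h3 := hZ5 x y z w s
    have key : x*y*z*w*(t*s + s*t) =
        x*y*z*w*((t+s)*(t+s)) - x*y*z*w*(t*t) - x*y*z*w*(s*s) := by noncomm_ring
    rw [h1, h2, h3] at key
    simpa using key
  have hZ1p : ∀ t s x y z w : R, (t*s + s*t)*x*y*z*w = 0 := by
    intro t s x y z w
    have h1 := hZ1 (t + s) x y z w
    have h2 := hZ1 t x y z w
    have h3 := hZ1 s x y z w
    have key : (t*s + s*t)*x*y*z*w =
        (t+s)*(t+s)*x*y*z*w - t*t*x*y*z*w - s*s*x*y*z*w := by noncomm_ring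
    rw [h1, h2, h3] at key
    simpa using key
  -- Z4 : x y z t^2 w = 0
  have hZ4 : ∀ x y z t w : R, x*y*z*(t*t)*w = 0 := by
    intro x y z t w
    have e1 := hZ1 t x y z w
    have e2 := hZ5p t x y z t w
    have e3 := hA t (x*y*z)
    have e4 := hZ5 x y z w t
    have e5 := hA t (x*y*z*w)
    have key : x*y*z*(t*t)*w =
        (-2:ℤ) • (t*t*x*y*z*w) - t*x*y*z*(t*w + w*t)
          + (t*t*(x*y*z) + t*(x*y*z)*t + (x*y*z)*t*t)*w
          - x*y*z*w*(t*t)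
          + (t*t*(x*y*z*w) + t*(x*y*z*w)*t + (x*y*z*w)*t*t) := by noncomm_ring
    rw [e1, e2, e3, e4, e5] at key
    simpa using key
  have hZ4p : ∀ x y z t s w : R, x*y*z*(t*s + s*t)*w = 0 := by
    intro x y z t s w
    have h1 := hZ4 x y z (t + s) w
    have h2 := hZ4 x y z t w
    have h3 := hZ4 x y z s w
    have key : x*y*z*(t*s + s*t)*w =
        x*y*z*((t+s)*(t+s))*w - x*y*z*(t*t)*w - x*y*z*(s*s)*w := by noncomm_ring
    rw [h1, h2, h3] at key
    simpa using key
  -- Z3 : x y t^2 z w = 0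
  have hZ3 : ∀ x y t z w : R, x*y*(t*t)*z*w = 0 := by
    intro x y t z w
    have e1 := hZ4p x y t t z w
    have e2 := hZ5p x y t z t w
    have e3 := hA t (z*w)
    have e4 := hZ5 x y z w t
    have key : (2:ℤ) • (x*y*(t*t)*z*w) =
        x*y*t*(t*z + z*t)*w - x*y*t*z*(t*w + w*t)
          + x*y*(t*t*(z*w) + t*(z*w)*t + (z*w)*t*t)
          - x*y*z*w*(t*t) := by noncomm_ring
    rw [e1, e2, e3, e4] at key
    simp only [smul_zero, mul_zero, zero_mul, add_zero, zero_add, sub_zero, zero_sub, neg_zero] at key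
    exact cancel 2 h2K _ key
  -- Z2 : x t^2 y z w = 0
  have hZ2 : ∀ x t y z w : R, x*(t*t)*y*z*w = 0 := by
    intro x t y z w
    have e1 := hA t (y*z*w)
    have e2 := hZ1p t x y z w t
    have e3 := hA t (x*y*z*w)
    have e4 := hZ1 t x y z w
    have e5 := hZ5 x y z w t
    have key : x*(t*t)*y*z*w =
        x*(t*t*(y*z*w) + t*(y*z*w)*t + (y*z*w)*t*t)
          - (t*x + x*t)*y*z*w*t
          + (t*t*(x*y*z*w) + t*(x*y*z*w)*t + (x*y*z*w)*t*t)
          - t*t*x*y*z*w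
          + (-2:ℤ) • (x*y*z*w*(t*t)) := by noncomm_ring
    rw [e1, e2, e3, e4, e5] at key
    simpa using key
  -- cyclic permutation lemmas
  have c123 : ∀ a b c d e f : R, a*b*c*d*e*f = b*c*a*d*e*f := by
    intro a b c d e f
    have e1 := hZ1 (a + b) c d e f
    have e2 := hZ1 a c d e f
    have e3 := hZ1 b c d e f
    have e4 := hZ2 b (a + c) d e f
    have e5 := hZ2 b a d e f
    have e6 := hZ2 b c d e f
    have key : a*b*c*d*e*f - b*c*a*d*e*f =
        ((a+b)*(a+b)*c*d*e*f - a*a*c*d*e*f - b*b*c*d*e*f)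
          - (b*((a+c)*(a+c))*d*e*f - b*(a*a)*d*e*f - b*(c*c)*d*e*f) := by
      noncomm_ring
    rw [e1, e2, e3, e4, e5, e6] at key
    have : a*b*c*d*e*f - b*c*a*d*e*f = 0 := by simpa using key
    exact sub_eq_zero.mp this
  have c234 : ∀ a b c d e f : R, a*b*c*d*e*f = a*c*d*b*e*f := by
    intro a b c d e f
    have e1 := hZ2 a (b + c) d e f
    have e2 := hZ2 a b d e f
    have e3 := hZ2 a c d e f
    have e4 := hZ3 a c (b + d) e f
    have e5 := hZ3 a c b e f
    have e6 := hZ3 a c d e f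
    have key : a*b*c*d*e*f - a*c*d*b*e*f =
        (a*((b+c)*(b+c))*d*e*f - a*(b*b)*d*e*f - a*(c*c)*d*e*f)
          - (a*c*((b+d)*(b+d))*e*f - a*c*(b*b)*e*f - a*c*(d*d)*e*f) := by
      noncomm_ring
    rw [e1, e2, e3, e4, e5, e6] at key
    have : a*b*c*d*e*f - a*c*d*b*e*f = 0 := by simpa using key
    exact sub_eq_zero.mp this
  have c345 : ∀ a b c d e f : R, a*b*c*d*e*f = a*b*d*e*c*f := by
    intro a b c d e f
    have e1 := hZ3 a b (c + d) e f
    have e2 := hZ3 a b c e f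
    have e3 := hZ3 a b d e f
    have e4 := hZ4 a b d (c + e) f
    have e5 := hZ4 a b d c f
    have e6 := hZ4 a b d e f
    have key : a*b*c*d*e*f - a*b*d*e*c*f =
        (a*b*((c+d)*(c+d))*e*f - a*b*(c*c)*e*f - a*b*(d*d)*e*f)
          - (a*b*d*((c+e)*(c+e))*f - a*b*d*(c*c)*f - a*b*d*(e*e)*f) := by
      noncomm_ring
    rw [e1, e2, e3, e4, e5, e6] at key
    have : a*b*c*d*e*f - a*b*d*e*c*f = 0 := by simpa using key
    exact sub_eq_zero.mp this
  have c456 : ∀ a b c d e f : R, a*b*c*d*e*f = a*b*c*e*f*d := by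
    intro a b c d e f
    have e1 := hZ4 a b c (d + e) f
    have e2 := hZ4 a b c d f
    have e3 := hZ4 a b c e f
    have e4 := hZ5 a b c e (d + f)
    have e5 := hZ5 a b c e d
    have e6 := hZ5 a b c e f
    have key : a*b*c*d*e*f - a*b*c*e*f*d =
        (a*b*c*((d+e)*(d+e))*f - a*b*c*(d*d)*f - a*b*c*(e*e)*f)
          - (a*b*c*e*((d+f)*(d+f)) - a*b*c*e*(d*d) - a*b*c*e*(f*f)) := by
      noncomm_ring
    rw [e1, e2, e3, e4, e5, e6] at key
    have : a*b*c*d*e*f - a*b*c*e*f*d = 0 := by simpa using key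
    exact sub_eq_zero.mp this
  -- endgame: symmetrize over the three 2-blocks (all block permutations are even)
  have hblocks := hS (a1*a2) (a3*a4) (a5*a6)
  have t1 : (a1*a2)*(a3*a4)*(a5*a6) = a1*a2*a3*a4*a5*a6 := by noncomm_ring
  have t2 : (a1*a2)*(a5*a6)*(a3*a4) = a1*a2*a3*a4*a5*a6 := by
    have h : (a1*a2)*(a5*a6)*(a3*a4) = a1*a2*a5*a6*a3*a4 := by noncomm_ring
    rw [h, c456 a1 a2 a5 a6 a3 a4, c345 a1 a2 a5 a3 a4 a6]
  have t3 : (a3*a4)*(a1*a2)*(a5*a6) = a1*a2*a3*a4*a5*a6 := by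
    have h : (a3*a4)*(a1*a2)*(a5*a6) = a3*a4*a1*a2*a5*a6 := by noncomm_ring
    rw [h, c234 a3 a4 a1 a2 a5 a6, c123 a3 a1 a2 a4 a5 a6]
  have t4 : (a3*a4)*(a5*a6)*(a1*a2) = a1*a2*a3*a4*a5*a6 := by
    have h : (a3*a4)*(a5*a6)*(a1*a2) = a3*a4*a5*a6*a1*a2 := by noncomm_ring
    rw [h, c456 a3 a4 a5 a6 a1 a2, c345 a3 a4 a5 a1 a2 a6,
      c234 a3 a4 a1 a2 a5 a6, c123 a3 a1 a2 a4 a5 a6]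
  have t5 : (a5*a6)*(a1*a2)*(a3*a4) = a1*a2*a3*a4*a5*a6 := by
    have h : (a5*a6)*(a1*a2)*(a3*a4) = a5*a6*a1*a2*a3*a4 := by noncomm_ring
    rw [h, c234 a5 a6 a1 a2 a3 a4, c123 a5 a1 a2 a6 a3 a4,
      c456 a1 a2 a5 a6 a3 a4, c345 a1 a2 a5 a3 a4 a6]
  have t6 : (a5*a6)*(a3*a4)*(a1*a2) = a1*a2*a3*a4*a5*a6 := by
    have h : (a5*a6)*(a3*a4)*(a1*a2) = a5*a6*a3*a4*a1*a2 := by noncomm_ring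
    rw [h, c234 a5 a6 a3 a4 a1 a2, c123 a5 a3 a4 a6 a1 a2,
      c456 a3 a4 a5 a6 a1 a2, c345 a3 a4 a5 a1 a2 a6,
      c234 a3 a4 a1 a2 a5 a6, c123 a3 a1 a2 a4 a5 a6]
  rw [t1, t2, t3, t4, t5, t6] at hblocks
  have key : (6:ℤ) • (a1*a2*a3*a4*a5*a6) = 0 := by
    rw [← hblocks]; abel
  exact cancel 6 h6K _ key
end

section
/- Let R be an associative algebra over a field of characteristic 0 or > 3 satisfying x^3 = 0, and suppose the identities x^2 a b c d = 0 and a b c d x^2 = 0 hold (consequences of x^3=0 in this characteristic). Then for every permutation σ of {1,2,3,4} and all x, a1, a2, a3, a4: a1 x^2 a2 a3 a4 = sgn(σ) · a_{σ(1)} x^2 a_{σ(2)} a_{σ(3)} a_{σ(4)}. -/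
set_option maxHeartbeats 4000000 in
private theorem key_zero {K R : Type*} [Field K] [NonUnitalRing R] [Module K R]
    [IsScalarTower K R R] [SMulCommClass K R R]
    (h2ne : (2:K) ≠ 0) (h3ne : (3:K) ≠ 0)
    (hcube : ∀ x : R, x * x * x = 0)
    (h1 : ∀ x a b c d : R, x * x * a * b * c * d = 0)
    (h2 : ∀ a b c d x : R, a * b * c * d * (x * x) = 0)
    (a b c d x : R) : a * (x * x) * b * c * d = 0 := by
  have hB : ∀ u v : R, u*u*v + u*v*u + v*(u*u) = 0 := by
    intro u v
    have h2P : (u*u*v + u*v*u + v*(u*u)) + (u*u*v + u*v*u + v*(u*u)) =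
        ((u+v)*(u+v)*(u+v)) - ((u-v)*(u-v)*(u-v)) - (v*v*v) - (v*v*v) := by noncomm_ring
    rw [hcube (u+v), hcube (u-v), hcube v] at h2P
    simp only [sub_zero, zero_sub, neg_zero, zero_add] at h2P
    have h2s : ((2:K)) • (u*u*v + u*v*u + v*(u*u)) = 0 := by
      rw [two_smul]; simpa using h2P
    calc u*u*v + u*v*u + v*(u*u) = ((2:K)⁻¹ * 2) • (u*u*v + u*v*u + v*(u*u)) := by
          rw [inv_mul_cancel₀ h2ne, one_smul]
      _ = (2:K)⁻¹ • ((2:K) • (u*u*v + u*v*u + v*(u*u))) := by rw [mul_smul]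
      _ = 0 := by rw [h2s, smul_zero]
  have hT : ∀ u v w : R,
      u*v*w + u*w*v + v*u*w + v*w*u + w*u*v + w*v*u = 0 := by
    intro u v w
    have e : u*v*w + u*w*v + v*u*w + v*w*u + w*u*v + w*v*u =
        ((u+w)*(u+w)*v + (u+w)*v*(u+w) + v*((u+w)*(u+w)))
        - (u*u*v + u*v*u + v*(u*u)) - (w*w*v + w*v*w + v*(w*w)) := by noncomm_ring
    rw [hB (u+w) v, hB u v, hB w v] at e
    simpa using e
  have h12ne : ((12:K)) ≠ 0 := by
    have : (12:K) = 2*2*3 := by norm_num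
    rw [this]
    exact mul_ne_zero (mul_ne_zero h2ne h2ne) h3ne
  have E0 : (x*x*(a*b*c) + x*(a*b*c)*x + (a*b*c)*(x*x))*d = 0 := by rw [hB x (a*b*c)]; simp
  have E1 : (x*x*(a*b*c*d) + x*(a*b*c*d)*x + (a*b*c*d)*(x*x)) = 0 := hB x (a*b*c*d)
  have E2 : a*(x*x*b + x*b*x + b*(x*x))*c*d = 0 := by rw [hB x b]; simp
  have E3 : a*(x*x*(b*c) + x*(b*c)*x + (b*c)*(x*x))*d = 0 := by rw [hB x (b*c)]; simp
  have E4 : a*(x*x*(b*c*d) + x*(b*c*d)*x + (b*c*d)*(x*x)) = 0 := by rw [hB x (b*c*d)]; simp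
  have E5 : a*b*(x*x*c + x*c*x + c*(x*x))*d = 0 := by rw [hB x c]; simp
  have E6 : a*b*(x*x*(c*d) + x*(c*d)*x + (c*d)*(x*x)) = 0 := by rw [hB x (c*d)]; simp
  have E7 : a*b*c*(x*x*d + x*d*x + d*(x*x)) = 0 := by rw [hB x d]; simp
  have E8 : x*x*a*b*c*d = 0 := h1 x a b c d
  have E9 : a*b*c*d*(x*x) = 0 := h2 a b c d x
  have E10 : (x*x*(a*b*d*c) + x*(a*b*d*c)*x + (a*b*d*c)*(x*x)) = 0 := hB x (a*b*d*c)
  have E11 : a*(x*x*(b*d) + x*(b*d)*x + (b*d)*(x*x))*c = 0 := by rw [hB x (b*d)]; simp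
  have E12 : a*(x*x*(b*d*c) + x*(b*d*c)*x + (b*d*c)*(x*x)) = 0 := by rw [hB x (b*d*c)]; simp
  have E13 : a*b*(x*x*d + x*d*x + d*(x*x))*c = 0 := by rw [hB x d]; simp
  have E14 : a*b*(x*x*(d*c) + x*(d*c)*x + (d*c)*(x*x)) = 0 := by rw [hB x (d*c)]; simp
  have E15 : a*b*d*(x*x*c + x*c*x + c*(x*x)) = 0 := by rw [hB x c]; simp
  have E16 : x*x*a*b*d*c = 0 := h1 x a b d c
  have E17 : a*b*d*c*(x*x) = 0 := h2 a b d c x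
  have E18 : a*c*b*d*(x*x) = 0 := h2 a c b d x
  have E19 : a*(x*x*c + x*c*x + c*(x*x))*d*b = 0 := by rw [hB x c]; simp
  have E20 : a*(x*x*(c*d*b) + x*(c*d*b)*x + (c*d*b)*(x*x)) = 0 := by rw [hB x (c*d*b)]; simp
  have E21 : a*c*(x*x*d + x*d*x + d*(x*x))*b = 0 := by rw [hB x d]; simp
  have E22 : a*c*(x*x*(d*b) + x*(d*b)*x + (d*b)*(x*x)) = 0 := by rw [hB x (d*b)]; simp
  have E23 : a*c*d*(x*x*b + x*b*x + b*(x*x)) = 0 := by rw [hB x b]; simp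
  have E24 : a*c*d*b*(x*x) = 0 := h2 a c d b x
  have E25 : a*(x*x*(d*b) + x*(d*b)*x + (d*b)*(x*x))*c = 0 := by rw [hB x (d*b)]; simp
  have E26 : a*(x*x*(d*b*c) + x*(d*b*c)*x + (d*b*c)*(x*x)) = 0 := by rw [hB x (d*b*c)]; simp
  have E27 : a*d*(x*x*b + x*b*x + b*(x*x))*c = 0 := by rw [hB x b]; simp
  have E28 : a*d*(x*x*(b*c) + x*(b*c)*x + (b*c)*(x*x)) = 0 := by rw [hB x (b*c)]; simp
  have E29 : a*d*b*(x*x*c + x*c*x + c*(x*x)) = 0 := by rw [hB x c]; simp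
  have E30 : a*d*b*c*(x*x) = 0 := h2 a d b c x
  have E31 : a*(x*x*d + x*d*x + d*(x*x))*c*b = 0 := by rw [hB x d]; simp
  have E32 : a*(x*x*(d*c*b) + x*(d*c*b)*x + (d*c*b)*(x*x)) = 0 := by rw [hB x (d*c*b)]; simp
  have E33 : a*d*(x*x*c + x*c*x + c*(x*x))*b = 0 := by rw [hB x c]; simp
  have E34 : a*d*(x*x*(c*b) + x*(c*b)*x + (c*b)*(x*x)) = 0 := by rw [hB x (c*b)]; simp
  have E35 : a*d*c*(x*x*b + x*b*x + b*(x*x)) = 0 := by rw [hB x b]; simp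
  have E36 : a*d*c*b*(x*x) = 0 := h2 a d c b x
  have E37 : (x*x*(c*a*b*d) + x*(c*a*b*d)*x + (c*a*b*d)*(x*x)) = 0 := hB x (c*a*b*d)
  have E38 : x*x*c*a*b*d = 0 := h1 x c a b d
  have E39 : c*a*b*d*(x*x) = 0 := h2 c a b d x
  have E40 : (x*x*c + x*c*x + c*(x*x))*d*a*b = 0 := by rw [hB x c]; simp
  have E41 : (x*x*(c*d*a*b) + x*(c*d*a*b)*x + (c*d*a*b)*(x*x)) = 0 := hB x (c*d*a*b)
  have E42 : c*(x*x*d + x*d*x + d*(x*x))*a*b = 0 := by rw [hB x d]; simp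
  have E43 : c*(x*x*(d*a*b) + x*(d*a*b)*x + (d*a*b)*(x*x)) = 0 := by rw [hB x (d*a*b)]; simp
  have E44 : c*d*(x*x*(a*b) + x*(a*b)*x + (a*b)*(x*x)) = 0 := by rw [hB x (a*b)]; simp
  have E45 : c*d*a*b*(x*x) = 0 := h2 c d a b x
  have E46 : (x*x*(d*a*b*c) + x*(d*a*b*c)*x + (d*a*b*c)*(x*x)) = 0 := hB x (d*a*b*c)
  have E47 : x*x*d*a*b*c = 0 := h1 x d a b c
  have E48 : d*c*a*b*(x*x) = 0 := h2 d c a b x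
  have E49 : ((a*b)*(c*d)*x + (a*b)*x*(c*d) + (c*d)*(a*b)*x + (c*d)*x*(a*b) + x*(a*b)*(c*d) + x*(c*d)*(a*b))*x = 0 := by rw [hT (a*b) (c*d) x]; simp
  have E50 : a*(b*c*(d*x) + b*(d*x)*c + c*b*(d*x) + c*(d*x)*b + (d*x)*b*c + (d*x)*c*b)*x = 0 := by rw [hT b c (d*x)]; simp
  have E51 : a*(b*(c*d)*x + b*x*(c*d) + (c*d)*b*x + (c*d)*x*b + x*b*(c*d) + x*(c*d)*b)*x = 0 := by rw [hT b (c*d) x]; simp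
  have E52 : a*((b*c)*d*x + (b*c)*x*d + d*(b*c)*x + d*x*(b*c) + x*(b*c)*d + x*d*(b*c))*x = 0 := by rw [hT (b*c) d x]; simp
  have E53 : a*b*(c*d*x + c*x*d + d*c*x + d*x*c + x*c*d + x*d*c)*x = 0 := by rw [hT c d x]; simp
  have E54 : ((a*b)*c*x + (a*b)*x*c + c*(a*b)*x + c*x*(a*b) + x*(a*b)*c + x*c*(a*b))*d*x = 0 := by rw [hT (a*b) c x]; simp
  have E55 : ((a*b)*c*(x*d) + (a*b)*(x*d)*c + c*(a*b)*(x*d) + c*(x*d)*(a*b) + (x*d)*(a*b)*c + (x*d)*c*(a*b))*x = 0 := by rw [hT (a*b) c (x*d)]; simp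
  have E56 : ((a*b)*(c*x)*d + (a*b)*d*(c*x) + (c*x)*(a*b)*d + (c*x)*d*(a*b) + d*(a*b)*(c*x) + d*(c*x)*(a*b))*x = 0 := by rw [hT (a*b) (c*x) d]; simp
  have E57 : ((a*b)*(c*x*d)*x + (a*b)*x*(c*x*d) + (c*x*d)*(a*b)*x + (c*x*d)*x*(a*b) + x*(a*b)*(c*x*d) + x*(c*x*d)*(a*b)) = 0 := hT (a*b) (c*x*d) x
  have E58 : a*(b*c*x + b*x*c + c*b*x + c*x*b + x*b*c + x*c*b)*d*x = 0 := by rw [hT b c x]; simp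
  have E59 : a*(b*c*(x*d) + b*(x*d)*c + c*b*(x*d) + c*(x*d)*b + (x*d)*b*c + (x*d)*c*b)*x = 0 := by rw [hT b c (x*d)]; simp
  have E60 : a*(b*(c*x)*d + b*d*(c*x) + (c*x)*b*d + (c*x)*d*b + d*b*(c*x) + d*(c*x)*b)*x = 0 := by rw [hT b (c*x) d]; simp
  have E61 : a*(b*(c*x*d)*x + b*x*(c*x*d) + (c*x*d)*b*x + (c*x*d)*x*b + x*b*(c*x*d) + x*(c*x*d)*b) = 0 := by rw [hT b (c*x*d) x]; simp
  have E62 : ((a*b)*(d*c)*x + (a*b)*x*(d*c) + (d*c)*(a*b)*x + (d*c)*x*(a*b) + x*(a*b)*(d*c) + x*(d*c)*(a*b))*x = 0 := by rw [hT (a*b) (d*c) x]; simp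
  have E63 : a*(b*(d*c)*x + b*x*(d*c) + (d*c)*b*x + (d*c)*x*b + x*b*(d*c) + x*(d*c)*b)*x = 0 := by rw [hT b (d*c) x]; simp
  have E64 : a*(b*d*x + b*x*d + d*b*x + d*x*b + x*b*d + x*d*b)*c*x = 0 := by rw [hT b d x]; simp
  have E65 : a*(b*d*(x*c) + b*(x*c)*d + d*b*(x*c) + d*(x*c)*b + (x*c)*b*d + (x*c)*d*b)*x = 0 := by rw [hT b d (x*c)]; simp
  have E66 : a*(b*(d*x*c)*x + b*x*(d*x*c) + (d*x*c)*b*x + (d*x*c)*x*b + x*b*(d*x*c) + x*(d*x*c)*b) = 0 := by rw [hT b (d*x*c) x]; simp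
  have E67 : a*((b*x*c)*d*x + (b*x*c)*x*d + d*(b*x*c)*x + d*x*(b*x*c) + x*(b*x*c)*d + x*d*(b*x*c)) = 0 := by rw [hT (b*x*c) d x]; simp
  have hz : (12 : ℤ) • (a*(x*x)*b*c*d) = 0 := by
    have main : (12 : ℤ) • (a*(x*x)*b*c*d) = (-8 : ℤ) • ((x*x*(a*b*c) + x*(a*b*c)*x + (a*b*c)*(x*x))*d) + (-4 : ℤ) • ((x*x*(a*b*c*d) + x*(a*b*c*d)*x + (a*b*c*d)*(x*x))) + (2 : ℤ) • (a*(x*x*b + x*b*x + b*(x*x))*c*d) + (2 : ℤ) • (a*(x*x*(b*c) + x*(b*c)*x + (b*c)*(x*x))*d) + (8 : ℤ) • (a*(x*x*(b*c*d) + x*(b*c*d)*x + (b*c*d)*(x*x))) + (-4 : ℤ) • (a*b*(x*x*c + x*c*x + c*(x*x))*d) + (2 : ℤ) • (a*b*(x*x*(c*d) + x*(c*d)*x + (c*d)*(x*x))) + (10 : ℤ) • (a*b*c*(x*x*d + x*d*x + d*(x*x))) + (12 : ℤ) • (x*x*a*b*c*d) + (-3 : ℤ) • (a*b*c*d*(x*x))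 + (-12 : ℤ) • ((x*x*(a*b*d*c) + x*(a*b*d*c)*x + (a*b*d*c)*(x*x))) + (2 : ℤ) • (a*(x*x*(b*d) + x*(b*d)*x + (b*d)*(x*x))*c) + (-2 : ℤ) • (a*(x*x*(b*d*c) + x*(b*d*c)*x + (b*d*c)*(x*x))) + (2 : ℤ) • (a*b*(x*x*d + x*d*x + d*(x*x))*c) + (-2 : ℤ) • (a*b*(x*x*(d*c) + x*(d*c)*x + (d*c)*(x*x))) + (-4 : ℤ) • (a*b*d*(x*x*c + x*c*x + c*(x*x))) + (12 : ℤ) • (x*x*a*b*d*c) + (21 : ℤ) • (a*b*d*c*(x*x)) + (-3 : ℤ) • (a*c*b*d*(x*x)) + (2 : ℤ) • (a*(x*x*c + x*c*x + c*(x*x))*d*b) + (-2 : ℤ) • (a*(x*x*(c*d*b) + x*(c*d*b)*x + (c*d*b)*(x*x))) + (2 : ℤ) • (a*c*(x*x*d + x*d*x + d*(x*x))*b) + (-4 : ℤ) • (a*c*(x*x*(d*b) + x*(d*b)*x + (d*b)*(x*x))) + (-2 : ℤ) • (a*c*d*(x*x*b + x*b*x + b*(x*x))) + (9 : ℤ)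 • (a*c*d*b*(x*x)) + (2 : ℤ) • (a*(x*x*(d*b) + x*(d*b)*x + (d*b)*(x*x))*c) + (-2 : ℤ) • (a*(x*x*(d*b*c) + x*(d*b*c)*x + (d*b*c)*(x*x))) + (2 : ℤ) • (a*d*(x*x*b + x*b*x + b*(x*x))*c) + (-2 : ℤ) • (a*d*(x*x*(b*c) + x*(b*c)*x + (b*c)*(x*x))) + (-4 : ℤ) • (a*d*b*(x*x*c + x*c*x + c*(x*x))) + (9 : ℤ) • (a*d*b*c*(x*x)) + (2 : ℤ) • (a*(x*x*d + x*d*x + d*(x*x))*c*b) + (-2 : ℤ) • (a*(x*x*(d*c*b) + x*(d*c*b)*x + (d*c*b)*(x*x))) + (2 : ℤ) • (a*d*(x*x*c + x*c*x + c*(x*x))*b) + (-4 : ℤ) • (a*d*(x*x*(c*b) + x*(c*b)*x + (c*b)*(x*x))) + (-2 : ℤ) • (a*d*c*(x*x*b + x*b*x + b*(x*x))) + (9 : ℤ) • (a*d*c*b*(x*x)) + (-12 : ℤ) • ((x*x*(c*a*b*d) + x*(c*a*b*d)*x + (c*a*b*d)*(x*x))) + (12 : ℤ) • (x*x*c*a*b*d)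 + (12 : ℤ) • (c*a*b*d*(x*x)) + (-8 : ℤ) • ((x*x*c + x*c*x + c*(x*x))*d*a*b) + (8 : ℤ) • ((x*x*(c*d*a*b) + x*(c*d*a*b)*x + (c*d*a*b)*(x*x))) + (-8 : ℤ) • (c*(x*x*d + x*d*x + d*(x*x))*a*b) + (16 : ℤ) • (c*(x*x*(d*a*b) + x*(d*a*b)*x + (d*a*b)*(x*x))) + (8 : ℤ) • (c*d*(x*x*(a*b) + x*(a*b)*x + (a*b)*(x*x))) + (-24 : ℤ) • (c*d*a*b*(x*x)) + (12 : ℤ) • ((x*x*(d*a*b*c) + x*(d*a*b*c)*x + (d*a*b*c)*(x*x))) + (-12 : ℤ) • (x*x*d*a*b*c) + (-12 : ℤ) • (d*c*a*b*(x*x)) + (-8 : ℤ) • (((a*b)*(c*d)*x + (a*b)*x*(c*d) + (c*d)*(a*b)*x + (c*d)*x*(a*b) + x*(a*b)*(c*d) + x*(c*d)*(a*b))*x) + (3 : ℤ) • (a*(b*c*(d*x) + b*(d*x)*c + c*b*(d*x) + c*(d*x)*b + (d*x)*b*c + (d*x)*c*b)*x) + (-1 : ℤ) • (a*(b*(c*d)*x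 + b*x*(c*d) + (c*d)*b*x + (c*d)*x*b + x*b*(c*d) + x*(c*d)*b)*x) + (-4 : ℤ) • (a*((b*c)*d*x + (b*c)*x*d + d*(b*c)*x + d*x*(b*c) + x*(b*c)*d + x*d*(b*c))*x) + (-3 : ℤ) • (a*b*(c*d*x + c*x*d + d*c*x + d*x*c + x*c*d + x*d*c)*x) + (12 : ℤ) • (((a*b)*c*x + (a*b)*x*c + c*(a*b)*x + c*x*(a*b) + x*(a*b)*c + x*c*(a*b))*d*x) + (-12 : ℤ) • (((a*b)*c*(x*d) + (a*b)*(x*d)*c + c*(a*b)*(x*d) + c*(x*d)*(a*b) + (x*d)*(a*b)*c + (x*d)*c*(a*b))*x) + (-12 : ℤ) • (((a*b)*(c*x)*d + (a*b)*d*(c*x) + (c*x)*(a*b)*d + (c*x)*d*(a*b) + d*(a*b)*(c*x) + d*(c*x)*(a*b))*x) + (8 : ℤ) • (((a*b)*(c*x*d)*x + (a*b)*x*(c*x*d) + (c*x*d)*(a*b)*x + (c*x*d)*x*(a*b) + x*(a*b)*(c*x*d) + x*(c*x*d)*(a*b))) + (-3 : ℤ) • (a*(b*c*x + b*x*c + c*b*x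 + c*x*b + x*b*c + x*c*b)*d*x) + (3 : ℤ) • (a*(b*c*(x*d) + b*(x*d)*c + c*b*(x*d) + c*(x*d)*b + (x*d)*b*c + (x*d)*c*b)*x) + (3 : ℤ) • (a*(b*(c*x)*d + b*d*(c*x) + (c*x)*b*d + (c*x)*d*b + d*b*(c*x) + d*(c*x)*b)*x) + (-2 : ℤ) • (a*(b*(c*x*d)*x + b*x*(c*x*d) + (c*x*d)*b*x + (c*x*d)*x*b + x*b*(c*x*d) + x*(c*x*d)*b)) + (12 : ℤ) • (((a*b)*(d*c)*x + (a*b)*x*(d*c) + (d*c)*(a*b)*x + (d*c)*x*(a*b) + x*(a*b)*(d*c) + x*(d*c)*(a*b))*x) + (-1 : ℤ) • (a*(b*(d*c)*x + b*x*(d*c) + (d*c)*b*x + (d*c)*x*b + x*b*(d*c) + x*(d*c)*b)*x) + (3 : ℤ) • (a*(b*d*x + b*x*d + d*b*x + d*x*b + x*b*d + x*d*b)*c*x) + (3 : ℤ) • (a*(b*d*(x*c) + b*(x*c)*d + d*b*(x*c) + d*(x*c)*b + (x*c)*b*d + (x*c)*d*b)*x) + (-2 : ℤ) • (a*(b*(d*x*c)*x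 + b*x*(d*x*c) + (d*x*c)*b*x + (d*x*c)*x*b + x*b*(d*x*c) + x*(d*x*c)*b)) + (-2 : ℤ) • (a*((b*x*c)*d*x + (b*x*c)*x*d + d*(b*x*c)*x + d*x*(b*x*c) + x*(b*x*c)*d + x*d*(b*x*c))) := by noncomm_ring
    rw [E0, E1, E2, E3, E4, E5, E6, E7, E8, E9, E10, E11, E12, E13, E14, E15, E16, E17, E18, E19, E20, E21, E22, E23, E24, E25, E26, E27, E28, E29, E30, E31, E32, E33, E34, E35, E36, E37, E38, E39, E40, E41, E42, E43, E44, E45, E46, E47, E48, E49, E50, E51, E52, E53, E54, E55, E56, E57, E58, E59, E60, E61, E62, E63, E64, E65, E66, E67] at main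
    simp only [smul_zero, add_zero, zero_add] at main
    exact main
  calc a * (x * x) * b * c * d
      = ((12:K)⁻¹ * 12) • (a * (x * x) * b * c * d) := by
        rw [inv_mul_cancel₀ h12ne, one_smul]
    _ = (12:K)⁻¹ • (((12:K)) • (a * (x * x) * b * c * d)) := by rw [mul_smul]
    _ = (12:K)⁻¹ • (((12:ℤ)) • (a * (x * x) * b * c * d)) := by
        rw [← Int.cast_smul_eq_zsmul K (12:ℤ) (a * (x * x) * b * c * d)]; norm_num
    _ = 0 := by rw [hz, smul_zero]

/-- Over a field of characteristic `0` or `> 3`, in a (non-unital) associative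
algebra satisfying `x^3 = 0` in which moreover `x^2*a*b*c*d = 0` and
`a*b*c*d*x^2 = 0` hold, products `a1 x^2 a2 a3 a4` are alternating:
`a1 x^2 a2 a3 a4 = sgn σ • (a_{σ(1)} x^2 a_{σ(2)} a_{σ(3)} a_{σ(4)})` for every
permutation `σ` of the four factors. -/
theorem stmt_9 {K R : Type*} [Field K] [NonUnitalRing R] [Module K R]
    [IsScalarTower K R R] [SMulCommClass K R R]
    (hchar : ∀ p : ℕ, CharP K p → p = 0 ∨ 3 < p)
    (hcube : ∀ x : R, x * x * x = 0)
    (h1 : ∀ x a b c d : R, x * x * a * b * c * d = 0)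
    (h2 : ∀ a b c d x : R, a * b * c * d * (x * x) = 0)
    (σ : Equiv.Perm (Fin 4)) (x : R) (a : Fin 4 → R) :
    a 0 * (x * x) * a 1 * a 2 * a 3 =
      (Equiv.Perm.sign σ : ℤ) •
        (a (σ 0) * (x * x) * a (σ 1) * a (σ 2) * a (σ 3)) := by
  obtain ⟨p, hp⟩ := CharP.exists K
  have hne : ∀ n : ℕ, 0 < n → n < 4 → (n : K) ≠ 0 := by
    intro n hn hn4 h0
    have hdvd : p ∣ n := (CharP.cast_eq_zero_iff K p n).mp h0
    rcases hchar p hp with h | h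
    · subst h; simp_all
    · exact absurd (Nat.le_of_dvd hn hdvd) (by omega)
  have h2ne : (2:K) ≠ 0 := by exact_mod_cast hne 2 (by norm_num) (by norm_num)
  have h3ne : (3:K) ≠ 0 := by exact_mod_cast hne 3 (by norm_num) (by norm_num)
  rw [key_zero h2ne h3ne hcube h1 h2, key_zero h2ne h3ne hcube h1 h2, smul_zero]
end

section
/- In the free associative algebra K⟨x1,...,xd⟩ modulo the T-ideal generated by all cubes f^3 of elements f of the augmentation ideal, any monomial (word) in which some generator x_i occurs more than 4 times is zero. Consequently every nonzero word has length at most 3d. -/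
/-!
Write `X` for the image of a generator `xᵢ`. Expanding `(X + t a)³ = 0` at two distinct
nonzero scalars `t` (this is where `K` infinite is used) gives `X²a + XaX + aX² = 0` for every
`a` without constant term, and together with `X³ = 0` this identity kills every product
`X a X b X c X` in which each of `a, b, c` is `1` or has no constant term. A word in which `xᵢ`
occurs four times has this shape, so it vanishes; by pigeonhole so does every word of length
greater than `3d`.
-/

noncomputable def augMap (K : Type*) [Field K] (d : ℕ) :
    FreeAlgebra K (Fin d) →ₐ[K] K :=
  FreeAlgebra.lift K (0 : Fin d → K)

/-- The relation whose closure under ring operations presents the quotient of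
`K⟨x₁,…,x_d⟩` by the (T-)ideal generated by all cubes `f^3` of elements `f`
of the augmentation ideal. -/
def cubeRel (K : Type*) [Field K] (d : ℕ) :
    FreeAlgebra K (Fin d) → FreeAlgebra K (Fin d) → Prop :=
  fun a b => ∃ f : FreeAlgebra K (Fin d), augMap K d f = 0 ∧ a = f ^ 3 ∧ b = 0

open Finset

theorem sq_mul_add_mul_mul_add_mul_sq_eq_zero {K A : Type*} [Field K] [Ring A] [Algebra K A]
    {c : K} (hc₀ : c ≠ 0) (hc₁ : c ≠ 1) {x a : A} (hx : x ^ 3 = 0) (ha : a ^ 3 = 0)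
    (hxa : (x + a) ^ 3 = 0) (hxca : (x + c • a) ^ 3 = 0) :
    x ^ 2 * a + x * a * x + a * x ^ 2 = 0 := by
  have expand : (c - c ^ 2) • (x ^ 2 * a + x * a * x + a * x ^ 2)
      = (x + c • a) ^ 3 - x ^ 3 - c ^ 3 • a ^ 3 - c ^ 2 • ((x + a) ^ 3 - x ^ 3 - a ^ 3) := by
    noncomm_ring
    module
  have hc : c - c ^ 2 ≠ 0 := by
    rw [sq, ← mul_one_sub]
    exact mul_ne_zero hc₀ (sub_ne_zero.mpr hc₁.symm)
  have hsmul : (c - c ^ 2) • (x ^ 2 * a + x * a * x + a * x ^ 2) = 0 := by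
    rw [expand, hx, ha, hxa, hxca]
    simp
  exact (smul_eq_zero.mp hsmul).resolve_left hc

section CubeZero

variable {A : Type*} [Ring A] {x : A} (hx : x ^ 3 = 0)
include hx

theorem sq_mul_mul_sq_eq_zero {a : A} (ha : x ^ 2 * a + x * a * x + a * x ^ 2 = 0) :
    x ^ 2 * a * x ^ 2 = 0 := by
  linear_combination (norm := noncomm_ring) x * ha * x - hx * (a * x) - x * a * hx

theorem sq_mul_mul_add_mul_mul_sq_eq_zero {a : A} (ha : x ^ 2 * a + x * a * x + a * x ^ 2 = 0) :
    x ^ 2 * a * x + x * a * x ^ 2 = 0 := by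
  linear_combination (norm := noncomm_ring) x * ha - hx * a

variable {σ : Type*} [SetLike σ A] [MulMemClass σ A] {S : σ}
  (hlin : ∀ a ∈ S, x ^ 2 * a + x * a * x + a * x ^ 2 = 0)
include hlin

theorem mul_mul_mul_mul_sq_eq_zero {a b : A} (ha : a ∈ S) (hb : b ∈ S) :
    x * a * x * b * x ^ 2 = 0 := by
  linear_combination (norm := noncomm_ring)
    hlin a ha * (b * x ^ 2) - sq_mul_mul_sq_eq_zero hx (hlin _ (mul_mem ha hb))
      - a * sq_mul_mul_sq_eq_zero hx (hlin b hb)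

theorem sq_mul_mul_mul_mul_eq_zero {a b : A} (ha : a ∈ S) (hb : b ∈ S) :
    x ^ 2 * a * x * b * x = 0 := by
  linear_combination (norm := noncomm_ring)
    sq_mul_mul_add_mul_mul_sq_eq_zero hx (hlin a ha) * (b * x)
      - x * a * sq_mul_mul_add_mul_mul_sq_eq_zero hx (hlin b hb)
      + mul_mul_mul_mul_sq_eq_zero hx hlin ha hb

theorem mul_mul_sq_mul_mul_eq_zero {a b : A} (ha : a ∈ S) (hb : b ∈ S) :
    x * a * x ^ 2 * b * x = 0 := by
  linear_combination (norm := noncomm_ring)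
    x * a * sq_mul_mul_add_mul_mul_sq_eq_zero hx (hlin b hb)
      - mul_mul_mul_mul_sq_eq_zero hx hlin ha hb

theorem mul_mul_mul_mul_mul_mul_eq_zero {a b c : A} (ha : a = 1 ∨ a ∈ S)
    (hb : b = 1 ∨ b ∈ S) (hc : c = 1 ∨ c ∈ S) : x * a * x * b * x * c * x = 0 := by
  rcases ha with rfl | ha <;> rcases hb with rfl | hb <;> rcases hc with rfl | hc
  · linear_combination (norm := noncomm_ring) hx * x
  · linear_combination (norm := noncomm_ring) hx * (c * x)
  · linear_combination (norm := noncomm_ring) sq_mul_mul_sq_eq_zero hx (hlin b hb)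
  · linear_combination (norm := noncomm_ring) sq_mul_mul_mul_mul_eq_zero hx hlin hb hc
  · linear_combination (norm := noncomm_ring) x * a * hx
  · linear_combination (norm := noncomm_ring) mul_mul_sq_mul_mul_eq_zero hx hlin ha hc
  · linear_combination (norm := noncomm_ring) mul_mul_mul_mul_sq_eq_zero hx hlin ha hb
  · linear_combination (norm := noncomm_ring)
      hlin a ha * (b * x * c * x) - sq_mul_mul_mul_mul_eq_zero hx hlin (mul_mem ha hb) hc
        - a * sq_mul_mul_mul_mul_eq_zero hx hlin hb hc

end CubeZero

theorem List.exists_eq_append_cons_of_lt_count {α : Type*} [DecidableEq α] {a : α} {k : ℕ}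
    {l : List α} (h : k < l.count a) : ∃ p t, l = p ++ a :: t ∧ k ≤ t.count a := by
  induction l with
  | nil => simp at h
  | cons b l ih =>
    by_cases hb : b = a
    · subst hb
      exact ⟨[], l, rfl, by simpa [List.count_cons_self, Nat.lt_succ_iff] using h⟩
    · obtain ⟨p, t, rfl, ht⟩ := ih (by rwa [List.count_cons_of_ne hb] at h)
      exact ⟨b :: p, t, rfl, ht⟩

theorem List.count_ofFn {α : Type*} [DecidableEq α] {n : ℕ} (w : Fin n → α) (a : α) :
    (List.ofFn w).count a = #{j | w j = a} := by
  rw [← Multiset.coe_count, ← Fin.univ_val_map, Multiset.count_map, card_def, filter_val]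
  simp only [eq_comm]

section Words

variable {ι A σ : Type*} [Ring A] [SetLike σ A] [MulMemClass σ A] {S : σ}
  {X : ι → A}

theorem prod_map_eq_one_or_mem (hXS : ∀ i, X i ∈ S) (l : List ι) :
    (l.map X).prod = 1 ∨ (l.map X).prod ∈ S := by
  induction l with
  | nil => exact Or.inl rfl
  | cons j l ih =>
    rw [List.map_cons, List.prod_cons]
    rcases ih with h | h
    · exact Or.inr (by simpa [h] using hXS j)
    · exact Or.inr (mul_mem (hXS j) h)

theorem prod_map_eq_zero_of_four_le_count [DecidableEq ι] (hXS : ∀ i, X i ∈ S) {i : ι}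
    (hx : X i ^ 3 = 0)
    (hlin : ∀ a ∈ S, X i ^ 2 * a + X i * a * X i + a * X i ^ 2 = 0) {l : List ι}
    (h : 4 ≤ l.count i) : (l.map X).prod = 0 := by
  obtain ⟨p, l₁, rfl, h₁⟩ := List.exists_eq_append_cons_of_lt_count h
  obtain ⟨q, l₂, rfl, h₂⟩ := List.exists_eq_append_cons_of_lt_count h₁
  obtain ⟨r, l₃, rfl, h₃⟩ := List.exists_eq_append_cons_of_lt_count h₂
  obtain ⟨s, t, rfl, -⟩ := List.exists_eq_append_cons_of_lt_count h₃
  have hcore := mul_mul_mul_mul_mul_mul_eq_zero hx hlin (prod_map_eq_one_or_mem hXS q)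
    (prod_map_eq_one_or_mem hXS r) (prod_map_eq_one_or_mem hXS s)
  simp only [List.map_append, List.map_cons, List.prod_append, List.prod_cons]
  linear_combination (norm := noncomm_ring) (p.map X).prod * hcore * (t.map X).prod

end Words

section CubeQuotient

variable (K : Type*) [Field K] (d : ℕ)

/-- The image of `ker (augMap K d)`, written as the preimage of `⊥ = {0}`. -/
noncomputable def augIdealImage : NonUnitalSubalgebra K (RingQuot (cubeRel K d)) :=
  ((⊥ : NonUnitalSubalgebra K K).comap (augMap K d)).map (RingQuot.mkAlgHom K (cubeRel K d))

variable {K d}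

theorem mkAlgHom_ι_mem_augIdealImage (i : Fin d) :
    RingQuot.mkAlgHom K (cubeRel K d) (FreeAlgebra.ι K i) ∈ augIdealImage K d :=
  NonUnitalSubalgebra.mem_map.mpr ⟨FreeAlgebra.ι K i, by simp [augMap], rfl⟩

theorem pow_three_eq_zero_of_mem_augIdealImage {s : RingQuot (cubeRel K d)}
    (hs : s ∈ augIdealImage K d) : s ^ 3 = 0 := by
  obtain ⟨f, hf, rfl⟩ := NonUnitalSubalgebra.mem_map.mp hs
  have hf₀ : augMap K d f = 0 := by simpa [NonUnitalAlgebra.mem_bot] using hf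
  rw [← map_pow, RingQuot.mkAlgHom_rel K ⟨f, hf₀, rfl, rfl⟩, map_zero]

theorem sq_mul_add_mul_mul_add_mul_sq_eq_zero_of_mem_augIdealImage [Infinite K]
    {x a : RingQuot (cubeRel K d)} (hx : x ∈ augIdealImage K d) (ha : a ∈ augIdealImage K d) :
    x ^ 2 * a + x * a * x + a * x ^ 2 = 0 := by
  classical
  obtain ⟨c, hc⟩ := Infinite.exists_notMem_finset ({0, 1} : Finset K)
  simp only [mem_insert, mem_singleton, not_or] at hc
  have cube : ∀ s ∈ augIdealImage K d, s ^ 3 = 0 :=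
    fun _ => pow_three_eq_zero_of_mem_augIdealImage
  exact sq_mul_add_mul_mul_add_mul_sq_eq_zero hc.1 hc.2 (cube x hx) (cube a ha)
    (cube _ (add_mem hx ha)) (cube _ (add_mem hx (SMulMemClass.smul_mem c ha)))

theorem prod_ofFn_mkAlgHom_ι_eq_zero [Infinite K] {n : ℕ} (w : Fin n → Fin d) {i : Fin d}
    (h : 3 < #{j | w j = i}) :
    (List.ofFn fun j => RingQuot.mkAlgHom K (cubeRel K d) (FreeAlgebra.ι K (w j))).prod = 0 := by
  rw [← List.count_ofFn] at h
  have hXi := mkAlgHom_ι_mem_augIdealImage (K := K) i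
  simpa only [List.map_ofFn, Function.comp_def] using
    prod_map_eq_zero_of_four_le_count mkAlgHom_ι_mem_augIdealImage
      (pow_three_eq_zero_of_mem_augIdealImage hXi)
      (fun _ ha => sq_mul_add_mul_mul_add_mul_sq_eq_zero_of_mem_augIdealImage hXi ha) h

end CubeQuotient

/-- In `N = K⟨x₁,…,x_d⟩ / id{f³ : f without constant term}` (K an infinite
field), any word in which some generator occurs more than 4 times is zero;
consequently every nonzero word has length at most `3d`. -/
theorem stmt_11 (K : Type*) [Field K] [Infinite K] (d : ℕ) :
    (∀ (n : ℕ) (w : Fin n → Fin d),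
        (∃ i : Fin d, 4 < (Finset.univ.filter fun j => w j = i).card) →
        (List.ofFn fun j =>
            RingQuot.mkAlgHom K (cubeRel K d) (FreeAlgebra.ι K (w j))).prod
          = 0) ∧
      ∀ (n : ℕ) (w : Fin n → Fin d),
        (List.ofFn fun j =>
            RingQuot.mkAlgHom K (cubeRel K d) (FreeAlgebra.ι K (w j))).prod
          ≠ 0 → n ≤ 3 * d := by
  refine ⟨fun n w ⟨i, hi⟩ => prod_ofFn_mkAlgHom_ι_eq_zero w (i := i) (by omega),
    fun n w hw => ?_⟩
  by_contra! hn
  obtain ⟨i, hi⟩ := Fintype.exists_lt_card_fiber_of_mul_lt_card w (n := 3)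
    (by simpa [mul_comm] using hn)
  exact hw (prod_ofFn_mkAlgHom_ι_eq_zero w hi)
end

section
/- Let K be a field of characteristic 3 and R an associative K-algebra satisfying a^3 = 0, with elements x, W such that xW^3 = W^3x, x^2 W^2 x = -x^2 W x W, and W x^2 W x = x^2 W x W hold. Then for all i, j, l ≥ 0: W^i · x^2 · W^l · x · W^j = l · x^2 · W · x · W^{i+j+l-1} (the coefficient l taken mod 3), where W^0 is interpreted as the empty factor. -/
/-- `npowMul a n b = a^n * b`, with `a^0` interpreted as an empty factor
(so that powers make sense in a non-unital ring). -/
def npowMul {R : Type*} [NonUnitalRing R] (a : R) : ℕ → R → R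
  | 0, b => b
  | n + 1, b => a * npowMul a n b

/-- `mulNpow b a n = b * a^n`, with `a^0` interpreted as an empty factor. -/
def mulNpow {R : Type*} [NonUnitalRing R] (b a : R) : ℕ → R
  | 0 => b
  | n + 1 => mulNpow b a n * a

section Aux

variable {R : Type*} [NonUnitalRing R]

lemma npowMul_zero_right (a : R) : ∀ n, npowMul a n (0 : R) = 0
  | 0 => rfl
  | n + 1 => by rw [npowMul, npowMul_zero_right a n, mul_zero]

lemma mulNpow_zero_left (a : R) : ∀ n, mulNpow (0 : R) a n = 0
  | 0 => rfl
  | n + 1 => by rw [mulNpow, mulNpow_zero_left a n, zero_mul]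

lemma mul_mulNpow (b c a : R) : ∀ n, b * mulNpow c a n = mulNpow (b * c) a n
  | 0 => rfl
  | n + 1 => by rw [mulNpow, mulNpow, ← mul_assoc, mul_mulNpow b c a n]

lemma npowMul_mul (a b c : R) : ∀ n, npowMul a n (b * c) = npowMul a n b * c
  | 0 => rfl
  | n + 1 => by rw [npowMul, npowMul, npowMul_mul a b c n, mul_assoc]

lemma npowMul_add (a b : R) (n : ℕ) :
    ∀ m, npowMul a (n + m) b = npowMul a m (npowMul a n b)
  | 0 => rfl
  | m + 1 => by rw [← Nat.add_assoc, npowMul, npowMul, npowMul_add a b n m]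

lemma mulNpow_add (b a : R) (n : ℕ) :
    ∀ m, mulNpow b a (n + m) = mulNpow (mulNpow b a n) a m
  | 0 => rfl
  | m + 1 => by rw [← Nat.add_assoc, mulNpow, mulNpow, mulNpow_add b a n m]

lemma npowMul_mulNpow (a b : R) (n : ℕ) :
    ∀ m, npowMul a n (mulNpow b a m) = mulNpow (npowMul a n b) a m
  | 0 => rfl
  | m + 1 => by rw [mulNpow, mulNpow, npowMul_mul, npowMul_mulNpow a b n m]

lemma mul_nsmul_comm (a b : R) : ∀ k : ℕ, a * (k • b) = k • (a * b)
  | 0 => by simp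
  | k + 1 => by rw [succ_nsmul, succ_nsmul, mul_add, mul_nsmul_comm a b k]

lemma nsmul_mul_comm (a b : R) : ∀ k : ℕ, (k • a) * b = k • (a * b)
  | 0 => by simp
  | k + 1 => by rw [succ_nsmul, succ_nsmul, add_mul, nsmul_mul_comm a b k]

lemma nsmul_mulNpow (b a : R) (k : ℕ) :
    ∀ n, mulNpow (k • b) a n = k • mulNpow b a n
  | 0 => rfl
  | n + 1 => by rw [mulNpow, mulNpow, nsmul_mulNpow b a k n, nsmul_mul_comm]

end Aux

/-- Over a field of characteristic 3, in a (non-unital) associative algebra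
satisfying `a^3 = 0`, given `x, W` with `x W^3 = W^3 x`,
`x^2 W^2 x = -x^2 W x W` and `W x^2 W x = x^2 W x W`, one has for all
`i, j, l ≥ 0`: `W^i x^2 W^l x W^j = l • (x^2 W x W^{i+j+l-1})` (the coefficient
`l` automatically taken mod 3, and `W^0` interpreted as the empty factor). -/
theorem stmt_18 {K R : Type*} [Field K] [CharP K 3] [NonUnitalRing R]
    [Module K R] [IsScalarTower K R R] [SMulCommClass K R R]
    (hcube : ∀ a : R, a * a * a = 0) (x W : R)
    (h1 : x * (W * W * W) = W * W * W * x)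
    (h2 : x * x * (W * W) * x = -(x * x * W * x * W))
    (h3 : W * (x * x) * W * x = x * x * W * x * W)
    (i j l : ℕ) :
    npowMul W i (x * x * npowMul W l (mulNpow x W j)) =
      l • mulNpow (x * x * W * x) W (i + j + l - 1) := by
  -- 3 • r = 0 for any r : R
  have h30 : ∀ r : R, (3 : ℕ) • r = 0 := by
    intro r
    rw [← Nat.cast_smul_eq_nsmul K 3 r]
    norm_num
    rw [show ((3 : K)) = 0 from by exact_mod_cast CharP.cast_eq_zero K 3]
    simp
  set c : R := x * x * W * x with hc
  -- key A : x^2 W^l x = l • c W^{l-1}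
  have keyA : ∀ l : ℕ, x * x * npowMul W l x = l • mulNpow c W (l - 1) := by
    intro l
    induction l using Nat.strong_induction_on with
    | _ l ih =>
      match l with
      | 0 => simpa [npowMul] using hcube x
      | 1 => simp [npowMul, mulNpow, hc, mul_assoc]
      | 2 =>
        have lhs : x * x * npowMul W 2 x = x * x * (W * W) * x := by
          simp [npowMul, mul_assoc]
        have two_eq : ∀ r : R, (2 : ℕ) • r = -r := by
          intro r
          have := h30 r
          rw [show (3 : ℕ) = 2 + 1 from rfl, succ_nsmul] at this
          exact eq_neg_of_add_eq_zero_left this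
        rw [lhs, h2, two_eq]
        simp [mulNpow, hc]
      | (m + 3) =>
        have e1 : npowMul W (m + 3) x = npowMul W m x * (W * W * W) := by
          rw [show m + 3 = m + 3 from rfl, Nat.add_comm m 3, npowMul_add]
          have : npowMul W 3 x = x * (W * W * W) := by
            show W * (W * (W * x)) = _
            rw [← mul_assoc, ← mul_assoc, ← h1]
          rw [this, npowMul_mul]
        have e2 : x * x * npowMul W (m + 3) x
            = (x * x * npowMul W m x) * (W * W * W) := by
          rw [e1, ← mul_assoc]
        rw [e2, ih m (by omega), nsmul_mul_comm]
        have e3 : ∀ (r : R) (k : ℕ),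
            mulNpow r W k * (W * W * W) = mulNpow r W (k + 3) := by
          intro r k
          show _ = mulNpow r W (k + 1 + 1 + 1)
          simp [mulNpow, mul_assoc]
        rw [e3]
        have hco : (m + 3) • mulNpow c W (m + 3 - 1)
            = m • mulNpow c W (m + 3 - 1) := by
          rw [add_nsmul, h30, add_zero]
        rw [hco]
        match m with
        | 0 => simp
        | n + 1 => norm_num
  -- key B : W * (c W^m) = c W^{m+1}
  have keyB : ∀ m : ℕ, W * mulNpow c W m = mulNpow c W (m + 1) := by
    intro m
    induction m with
    | zero =>
      show W * c = mulNpow c W 0 * W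
      rw [mulNpow, hc]
      calc W * (x * x * W * x) = W * (x * x) * W * x := by
            simp [mul_assoc]
        _ = x * x * W * x * W := h3
    | succ n ihn =>
      rw [mulNpow, ← mul_assoc, ihn, ← mulNpow]
  -- lift : W^i (k • c W^m) = k • c W^{m+i}
  have lift : ∀ (i m k : ℕ),
      npowMul W i (k • mulNpow c W m) = k • mulNpow c W (m + i) := by
    intro i
    induction i with
    | zero => intro m k; rfl
    | succ n ihn =>
      intro m k
      rw [npowMul, ihn, mul_nsmul_comm, keyB, Nat.add_assoc]
  -- assemble
  have inner : x * x * npowMul W l (mulNpow x W j)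
      = l • mulNpow c W (l - 1 + j) := by
    rw [npowMul_mulNpow, mul_mulNpow, mulNpow_add, keyA, nsmul_mulNpow]
  rw [inner, lift]
  match l with
  | 0 => simp
  | n + 1 =>
    have h : n + 1 - 1 + j + i = i + j + (n + 1) - 1 := by omega
    rw [h]
end
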